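/- Let D be a densely defined symmetric operator on a Hilbert space H of the form D = D₁ ⊗ I + I ⊗ D₂ acting on the tensor product H = H₁ ⊗ H₂ of graded Hilbert spaces (with appropriate graded tensor product sign conventions), where D₁ and D₂ are odd self-adjoint operators with discrete spectrum. Then ker D = ker D₁ ⊗ ker D₂, and consequently the graded index satisfies ind(D) = ind(D₁) · ind(D₂). -/

import Mathlib

open scoped TensorProduct

open LinearMap Module

namespace GradedAux

variable {V W : Type} [AddCommGroup V] [Module ℝ V] [FiniteDimensional ℝ V]
  [AddCommGroup W] [Module ℝ W] [FiniteDimensional ℝ W]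

noncomputable def tb (B₁ : V →ₗ[ℝ] V →ₗ[ℝ] ℝ) (B₂ : W →ₗ[ℝ] W →ₗ[ℝ] ℝ) :
    (V ⊗[ℝ] W) →ₗ[ℝ] (V ⊗[ℝ] W) →ₗ[ℝ] ℝ :=
  LinearMap.BilinForm.tensorDistrib ℝ ℝ (B₁ ⊗ₜ[ℝ] B₂)

lemma tb_tmul (B₁ : V →ₗ[ℝ] V →ₗ[ℝ] ℝ) (B₂ : W →ₗ[ℝ] W →ₗ[ℝ] ℝ)
    (v v' : V) (w w' : W) :
    tb B₁ B₂ (v ⊗ₜ[ℝ] w) (v' ⊗ₜ[ℝ] w') = B₁ v v' * B₂ w w' := by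
  simp [tb, smul_eq_mul, mul_comm]

lemma tb_posdef (B₁ : V →ₗ[ℝ] V →ₗ[ℝ] ℝ) (B₂ : W →ₗ[ℝ] W →ₗ[ℝ] ℝ)
    (hB₁symm : ∀ x y, B₁ x y = B₁ y x) (hB₂symm : ∀ x y, B₂ x y = B₂ y x)
    (hB₁pos : ∀ x, x ≠ 0 → 0 < B₁ x x) (hB₂pos : ∀ x, x ≠ 0 → 0 < B₂ x x) :
    ∀ x : V ⊗[ℝ] W, x ≠ 0 → 0 < tb B₁ B₂ x x := by
  obtain ⟨b₁, hb₁⟩ := LinearMap.BilinForm.exists_orthogonal_basis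
    (B := B₁) ⟨fun x y => hB₁symm x y⟩
  obtain ⟨b₂, hb₂⟩ := LinearMap.BilinForm.exists_orthogonal_basis
    (B := B₂) ⟨fun x y => hB₂symm x y⟩
  intro x hx
  set e := Basis.tensorProduct b₁ b₂ with he
  set c : _ → ℝ := fun p => e.repr x p with hc
  set d : Fin (finrank ℝ V) × Fin (finrank ℝ W) → ℝ := fun p => B₁ (b₁ p.1) (b₁ p.1) * B₂ (b₂ p.2) (b₂ p.2) with hd
  have hdpos : ∀ p, 0 < d p := fun p =>
    mul_pos (hB₁pos _ (b₁.ne_zero p.1)) (hB₂pos _ (b₂.ne_zero p.2))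
  have hdiag : ∀ p q, p ≠ q → tb B₁ B₂ (e p) (e q) = 0 := by
    rintro ⟨i, j⟩ ⟨k, l⟩ hpq
    rw [he, Basis.tensorProduct_apply, Basis.tensorProduct_apply, tb_tmul]
    rcases eq_or_ne i k with rfl | hik
    · rcases eq_or_ne j l with rfl | hjl
      · exact absurd rfl hpq
      · rw [hb₂ hjl, mul_zero]
    · rw [hb₁ hik, zero_mul]
  have hxr : ∑ p, c p • e p = x := e.sum_repr x
  have key : ∀ p, tb B₁ B₂ (e p) x = c p * d p := by
    intro p
    conv_lhs => rw [← hxr]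
    rw [map_sum, Finset.sum_eq_single p]
    · rw [map_smul, smul_eq_mul]
      congr 1
      simp only [he, Basis.tensorProduct_apply']
      rw [tb_tmul]
    · intro q _ hq
      rw [map_smul, hdiag p q hq.symm, smul_zero]
    · intro h; exact absurd (Finset.mem_univ p) h
  have hxx : (tb B₁ B₂) (∑ p, c p • e p) x = ∑ p, c p ^ 2 * d p := by
    rw [map_sum, LinearMap.sum_apply]
    refine Finset.sum_congr rfl fun p _ => ?_
    rw [LinearMap.map_smul, LinearMap.smul_apply, key p, smul_eq_mul]
    ring
  rw [hxr] at hxx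
  obtain ⟨p, hp⟩ : ∃ p, c p ≠ 0 := by
    by_contra h
    push_neg at h
    apply hx
    apply e.repr.map_eq_zero_iff.mp
    ext p
    exact h p
  rw [hxx]
  refine Finset.sum_pos' (fun q _ => mul_nonneg (sq_nonneg _) (hdpos q).le)
    ⟨p, Finset.mem_univ p, mul_pos (by positivity) (hdpos p)⟩

lemma tb_adjoint (B₁ : V →ₗ[ℝ] V →ₗ[ℝ] ℝ) (B₂ : W →ₗ[ℝ] W →ₗ[ℝ] ℝ)
    (f : V →ₗ[ℝ] V) (g : W →ₗ[ℝ] W)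
    (hf : ∀ x y, B₁ (f x) y = B₁ x (f y)) (hg : ∀ x y, B₂ (g x) y = B₂ x (g y)) :
    ∀ x y, tb B₁ B₂ (TensorProduct.map f g x) y = tb B₁ B₂ x (TensorProduct.map f g y) := by
  intro x y
  induction x using TensorProduct.induction_on with
  | zero => simp
  | tmul v w =>
    induction y using TensorProduct.induction_on with
    | zero => simp
    | tmul v' w' => rw [TensorProduct.map_tmul, TensorProduct.map_tmul, tb_tmul, tb_tmul, hf, hg]
    | add y₁ y₂ h1 h2 => simp only [map_add, h1, h2]
  | add x₁ x₂ h1 h2 => simp only [map_add, LinearMap.add_apply, h1, h2]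


section Invol
variable {V : Type*} [AddCommGroup V] [Module ℝ V] [FiniteDimensional ℝ V]

lemma invol_trace (e : V →ₗ[ℝ] V) (he : e ∘ₗ e = LinearMap.id) :
    ((finrank ℝ (LinearMap.ker (e - LinearMap.id)) : ℝ) -
      (finrank ℝ (LinearMap.ker (e + LinearMap.id)) : ℝ)) = LinearMap.trace ℝ V e := by
  have he' : ∀ x, e (e x) = x := fun x => congrArg (fun f => f x) he
  set kp := LinearMap.ker (e - LinearMap.id) with hkp
  set km := LinearMap.ker (e + LinearMap.id) with hkm
  have hmemp : ∀ x, x ∈ kp ↔ e x = x := by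
    intro x
    rw [hkp, LinearMap.mem_ker, LinearMap.sub_apply, LinearMap.id_apply, sub_eq_zero]
  have hmemm : ∀ x, x ∈ km ↔ e x = -x := by
    intro x
    rw [hkm, LinearMap.mem_ker, LinearMap.add_apply, LinearMap.id_apply, add_eq_zero_iff_eq_neg]
  have hcompl : IsCompl kp km := by
    constructor
    · rw [Submodule.disjoint_def]
      intro x hx1 hx2
      rw [hmemp] at hx1
      rw [hmemm] at hx2
      have hx2' : x + x = 0 := by
        have : x = -x := hx1.symm.trans hx2
        exact eq_neg_iff_add_eq_zero.mp this
      have h2 : (2 : ℝ) • x = 0 := by rw [two_smul]; exact hx2'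
      simpa using (smul_eq_zero.mp h2).resolve_left (by norm_num)
    · rw [codisjoint_iff, eq_top_iff]
      intro x _
      refine Submodule.mem_sup.mpr ⟨(1/2 : ℝ) • (x + e x), ?_, (1/2 : ℝ) • (x - e x), ?_, by module⟩
      · rw [hmemp, map_smul, map_add, he']
        module
      · rw [hmemm, map_smul, map_sub, he']
        module
  set N : Bool → Submodule ℝ V := fun b => cond b kp km with hN
  have hInt : DirectSum.IsInternal N := by
    rw [DirectSum.isInternal_submodule_iff_isCompl N (i := true) (j := false)
      (by simp) (by ext b; cases b <;> simp)]
    exact hcompl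
  have hmap : ∀ b, Set.MapsTo e (N b) (N b) := by
    intro b x hx
    cases b with
    | false =>
      have hx' : x ∈ km := hx
      have hgoal : e x ∈ km := by
        rw [hmemm, he' x, (hmemm x).mp hx', neg_neg]
      exact hgoal
    | true =>
      have hx' : x ∈ kp := hx
      have hgoal : e x ∈ kp := by
        rw [hmemp, he' x, (hmemp x).mp hx']
      exact hgoal
  have htr := LinearMap.trace_eq_sum_trace_restrict hInt hmap
  rw [Fintype.sum_bool] at htr
  have hrp : e.restrict (hmap true) = LinearMap.id := by
    ext x
    exact (hmemp x.1).mp x.2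
  have hrm : e.restrict (hmap false) = -LinearMap.id := by
    ext x
    exact (hmemm x.1).mp x.2
  have hNt : N true = kp := rfl
  have hNf : N false = km := rfl
  rw [htr, hrp, hrm, map_neg, LinearMap.trace_id, LinearMap.trace_id, hNt, hNf]
  ring


end Invol

lemma range_inf_ker {U X : Type*} [AddCommGroup U] [Module ℝ U] [AddCommGroup X] [Module ℝ X]
    (f : U →ₗ[ℝ] X) (hf : Function.Injective f) (g : U →ₗ[ℝ] U) (G : X →ₗ[ℝ] X)
    (hcomm : f ∘ₗ g = G ∘ₗ f) :
    LinearMap.range f ⊓ LinearMap.ker G = Submodule.map f (LinearMap.ker g) := by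
  ext x
  simp only [Submodule.mem_inf, LinearMap.mem_range, Submodule.mem_map, LinearMap.mem_ker]
  constructor
  · rintro ⟨⟨u, rfl⟩, hGx⟩
    refine ⟨u, hf ?_, rfl⟩
    rw [map_zero]
    have h := LinearMap.congr_fun hcomm u
    simp only [LinearMap.comp_apply] at h
    rw [h]; exact hGx
  · rintro ⟨u, hu, rfl⟩
    have h := LinearMap.congr_fun hcomm u
    simp only [LinearMap.comp_apply] at h
    exact ⟨⟨u, rfl⟩, by rw [← h, hu, map_zero]⟩


end GradedAux

open LinearMap Module GradedAux

set_option maxHeartbeats 2000000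

/-- Let `H₁, H₂` be (finite-dimensional, to have well-defined kernels and
indices) ℤ/2-graded real inner product spaces, the inner products given by positive
definite symmetric bilinear forms `B₁, B₂` and the gradings by involutions `ε₁, ε₂`.
Let `D₁, D₂` be odd symmetric (self-adjoint) operators.  The graded tensor product
operator is `D = D₁ ⊗̂ 1 + 1 ⊗̂ D₂`, realized with Koszul signs as
`D = D₁ ⊗ 1 + ε₁ ⊗ D₂` (so that `D² = D₁² ⊗ 1 + 1 ⊗ D₂²`).  Then
`ker D = ker D₁ ⊗ ker D₂`, and the graded index (with grading `ε = ε₁ ⊗ ε₂`)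
satisfies `ind D = ind D₁ · ind D₂`, where
`ind Dᵢ = dim ker Dᵢ⁺ − dim ker Dᵢ⁻`. -/
theorem graded_tensor_kernel_and_index
    (V W : Type) [AddCommGroup V] [Module ℝ V] [FiniteDimensional ℝ V]
    [AddCommGroup W] [Module ℝ W] [FiniteDimensional ℝ W]
    (B₁ : V →ₗ[ℝ] V →ₗ[ℝ] ℝ) (B₂ : W →ₗ[ℝ] W →ₗ[ℝ] ℝ)
    (hB₁symm : ∀ x y, B₁ x y = B₁ y x) (hB₂symm : ∀ x y, B₂ x y = B₂ y x)
    (hB₁pos : ∀ x, x ≠ 0 → 0 < B₁ x x) (hB₂pos : ∀ x, x ≠ 0 → 0 < B₂ x x)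
    (ε₁ : V →ₗ[ℝ] V) (ε₂ : W →ₗ[ℝ] W)
    (hε₁ : ε₁ ∘ₗ ε₁ = LinearMap.id) (hε₂ : ε₂ ∘ₗ ε₂ = LinearMap.id)
    (D₁ : V →ₗ[ℝ] V) (D₂ : W →ₗ[ℝ] W)
    -- symmetric (self-adjoint) with respect to the inner products
    (hD₁sa : ∀ x y, B₁ (D₁ x) y = B₁ x (D₁ y))
    (hD₂sa : ∀ x y, B₂ (D₂ x) y = B₂ x (D₂ y))
    -- the gradings are orthogonal (self-adjoint involutions)
    (hε₁sa : ∀ x y, B₁ (ε₁ x) y = B₁ x (ε₁ y))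
    (hε₂sa : ∀ x y, B₂ (ε₂ x) y = B₂ x (ε₂ y))
    -- D₁, D₂ are odd
    (hD₁odd : D₁ ∘ₗ ε₁ = -(ε₁ ∘ₗ D₁)) (hD₂odd : D₂ ∘ₗ ε₂ = -(ε₂ ∘ₗ D₂)) :
    -- the graded tensor product operator D = D₁ ⊗̂ 1 + 1 ⊗̂ D₂
    (LinearMap.ker (LinearMap.rTensor W D₁ + TensorProduct.map ε₁ D₂) =
      LinearMap.range (TensorProduct.map (LinearMap.ker D₁).subtype
        (LinearMap.ker D₂).subtype)) ∧
    -- multiplicativity of the graded index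
    ((Module.finrank ℝ
        ↥(LinearMap.ker (LinearMap.rTensor W D₁ + TensorProduct.map ε₁ D₂) ⊓
          LinearMap.ker (TensorProduct.map ε₁ ε₂ - LinearMap.id)) : ℤ) -
      (Module.finrank ℝ
        ↥(LinearMap.ker (LinearMap.rTensor W D₁ + TensorProduct.map ε₁ D₂) ⊓
          LinearMap.ker (TensorProduct.map ε₁ ε₂ + LinearMap.id)) : ℤ) =
      ((Module.finrank ℝ ↥(LinearMap.ker D₁ ⊓ LinearMap.ker (ε₁ - LinearMap.id)) : ℤ) -
        (Module.finrank ℝ ↥(LinearMap.ker D₁ ⊓ LinearMap.ker (ε₁ + LinearMap.id)) : ℤ)) *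
      ((Module.finrank ℝ ↥(LinearMap.ker D₂ ⊓ LinearMap.ker (ε₂ - LinearMap.id)) : ℤ) -
        (Module.finrank ℝ ↥(LinearMap.ker D₂ ⊓ LinearMap.ker (ε₂ + LinearMap.id)) : ℤ))) := by
  classical
  set k₁ := LinearMap.ker D₁ with hk₁
  set k₂ := LinearMap.ker D₂ with hk₂
  set A := LinearMap.rTensor W D₁ with hA
  set C := TensorProduct.map ε₁ D₂ with hC
  have hAmap : A = TensorProduct.map D₁ LinearMap.id := rfl
  have hACCA : A ∘ₗ C + C ∘ₗ A = 0 := by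
    rw [hAmap, hC, ← TensorProduct.map_comp, ← TensorProduct.map_comp,
      LinearMap.id_comp, LinearMap.comp_id, ← TensorProduct.map_add_left, hD₁odd,
      neg_add_cancel, TensorProduct.map_zero_left]
  -- Part 1
  have part1 : LinearMap.ker (A + C) =
      LinearMap.range (TensorProduct.map k₁.subtype k₂.subtype) := by
    apply le_antisymm
    · intro x hx
      have hDx : A x + C x = 0 := hx
      have posd := tb_posdef B₁ B₂ hB₁symm hB₂symm hB₁pos hB₂pos
      have hnn : ∀ y, 0 ≤ tb B₁ B₂ y y := by
        intro y; by_cases h : y = 0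
        · simp [h]
        · exact (posd y h).le
      have hadjA : ∀ u v, tb B₁ B₂ (A u) v = tb B₁ B₂ u (A v) := by
        rw [hAmap]; exact tb_adjoint B₁ B₂ D₁ LinearMap.id hD₁sa (fun _ _ => rfl)
      have hadjC : ∀ u v, tb B₁ B₂ (C u) v = tb B₁ B₂ u (C v) := by
        rw [hC]; exact tb_adjoint B₁ B₂ ε₁ D₂ hε₁sa hD₂sa
      have hcross : tb B₁ B₂ (A x) (C x) + tb B₁ B₂ (C x) (A x) = 0 := by
        rw [hadjA x (C x), hadjC x (A x), ← map_add]
        have h0 : A (C x) + C (A x) = 0 := by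
          have h := LinearMap.congr_fun hACCA x
          simpa using h
        rw [h0, map_zero]
      have hzero : tb B₁ B₂ (A x) (A x) + tb B₁ B₂ (C x) (C x) = 0 := by
        have h0 : tb B₁ B₂ (A x + C x) (A x + C x) = 0 := by rw [hDx]; simp
        simp only [map_add, LinearMap.add_apply] at h0
        linarith [hcross]
      have hA0 : A x = 0 := by
        by_contra h
        have h1 := posd (A x) h
        have h2 := hnn (C x)
        linarith
      have hC0 : C x = 0 := by
        by_contra h
        have h1 := posd (C x) h
        have h2 := hnn (A x)
        linarith
      have hL : LinearMap.lTensor V D₂ x = 0 := by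
        have hcomp : TensorProduct.map ε₁ LinearMap.id ∘ₗ C = LinearMap.lTensor V D₂ := by
          rw [hC, ← TensorProduct.map_comp, hε₁, LinearMap.id_comp]
          rfl
        calc LinearMap.lTensor V D₂ x = (TensorProduct.map ε₁ LinearMap.id ∘ₗ C) x := by
              rw [hcomp]
          _ = 0 := by rw [LinearMap.comp_apply, hC0, map_zero]
      have ex1 : Function.Exact k₁.subtype D₁ := LinearMap.exact_subtype_ker_map D₁
      have ex1' := Module.Flat.rTensor_exact (R := ℝ) W ex1
      obtain ⟨y, hy⟩ := (ex1' x).mp hA0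
      have hinj1 : Function.Injective (LinearMap.rTensor W k₁.subtype) :=
        Module.Flat.rTensor_preserves_injective_linearMap k₁.subtype k₁.injective_subtype
      have hy2 : LinearMap.lTensor ↥k₁ D₂ y = 0 := by
        apply hinj1
        rw [map_zero]
        have h1 : LinearMap.rTensor W k₁.subtype (LinearMap.lTensor ↥k₁ D₂ y) =
            (TensorProduct.map k₁.subtype D₂) y := by
          rw [← LinearMap.comp_apply, LinearMap.rTensor_comp_lTensor]
        have h2 : (TensorProduct.map k₁.subtype D₂) y =
            LinearMap.lTensor V D₂ (LinearMap.rTensor W k₁.subtype y) := by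
          rw [← LinearMap.comp_apply, LinearMap.lTensor_comp_rTensor]
        rw [h1, h2, hy, hL]
      have ex2 : Function.Exact k₂.subtype D₂ := LinearMap.exact_subtype_ker_map D₂
      have ex2' := Module.Flat.lTensor_exact (R := ℝ) ↥k₁ ex2
      obtain ⟨z, hz⟩ := (ex2' y).mp hy2
      refine ⟨z, ?_⟩
      rw [← hy, ← hz, ← LinearMap.comp_apply, LinearMap.rTensor_comp_lTensor]
    · rintro x ⟨z, rfl⟩
      have hc1 : D₁ ∘ₗ k₁.subtype = 0 := by ext v; exact v.2
      have hc2 : D₂ ∘ₗ k₂.subtype = 0 := by ext w; exact w.2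
      have hAz : A ∘ₗ TensorProduct.map k₁.subtype k₂.subtype = 0 := by
        rw [hAmap, ← TensorProduct.map_comp, hc1, TensorProduct.map_zero_left]
      have hCz : C ∘ₗ TensorProduct.map k₁.subtype k₂.subtype = 0 := by
        rw [hC, ← TensorProduct.map_comp, hc2, TensorProduct.map_zero_right]
      rw [LinearMap.mem_ker, LinearMap.add_apply, ← LinearMap.comp_apply, hAz,
        ← LinearMap.comp_apply, hCz]
      simp
  refine ⟨part1, ?_⟩
  -- Part 2
  have hε₁' : ∀ x, ε₁ (ε₁ x) = x := fun x => by
    have := LinearMap.congr_fun hε₁ x; simpa using this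
  have hε₂' : ∀ x, ε₂ (ε₂ x) = x := fun x => by
    have := LinearMap.congr_fun hε₂ x; simpa using this
  have hmt₁ : Set.MapsTo ε₁ k₁ k₁ := by
    intro x hx
    have hx' : D₁ x = 0 := hx
    show D₁ (ε₁ x) = 0
    have h := LinearMap.congr_fun hD₁odd x
    simp only [LinearMap.comp_apply, LinearMap.neg_apply] at h
    rw [h, hx', map_zero, neg_zero]
  have hmt₂ : Set.MapsTo ε₂ k₂ k₂ := by
    intro x hx
    have hx' : D₂ x = 0 := hx
    show D₂ (ε₂ x) = 0
    have h := LinearMap.congr_fun hD₂odd x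
    simp only [LinearMap.comp_apply, LinearMap.neg_apply] at h
    rw [h, hx', map_zero, neg_zero]
  set e₁ := ε₁.restrict hmt₁ with he₁def
  set e₂ := ε₂.restrict hmt₂ with he₂def
  have hcs₁ : k₁.subtype ∘ₗ e₁ = ε₁ ∘ₗ k₁.subtype := by
    ext x; simp [he₁def, LinearMap.restrict_apply]; rfl
  have hcs₂ : k₂.subtype ∘ₗ e₂ = ε₂ ∘ₗ k₂.subtype := by
    ext x; simp [he₂def, LinearMap.restrict_apply]; rfl
  have he₁ : e₁ ∘ₗ e₁ = LinearMap.id := by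
    ext x
    simp [he₁def, LinearMap.restrict_apply, hε₁']
    exact Subtype.ext (hε₁' x)
  have he₂ : e₂ ∘ₗ e₂ = LinearMap.id := by
    ext x
    simp [he₂def, LinearMap.restrict_apply, hε₂']
    exact Subtype.ext (hε₂' x)
  set φ := TensorProduct.map k₁.subtype k₂.subtype with hφdef
  have hφinj : Function.Injective φ := by
    have h1 : Function.Injective (LinearMap.rTensor W k₁.subtype) :=
      Module.Flat.rTensor_preserves_injective_linearMap k₁.subtype k₁.injective_subtype
    have h2 : Function.Injective (LinearMap.lTensor ↥k₁ k₂.subtype) :=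
      Module.Flat.lTensor_preserves_injective_linearMap k₂.subtype k₂.injective_subtype
    rw [hφdef, ← LinearMap.rTensor_comp_lTensor, LinearMap.coe_comp]
    exact h1.comp h2
  set E := TensorProduct.map e₁ e₂ with hEdef
  have hE : E ∘ₗ E = LinearMap.id := by
    rw [hEdef, ← TensorProduct.map_comp, he₁, he₂, TensorProduct.map_id]
  have hcommE : φ ∘ₗ E = TensorProduct.map ε₁ ε₂ ∘ₗ φ := by
    rw [hφdef, hEdef, ← TensorProduct.map_comp, ← TensorProduct.map_comp, hcs₁, hcs₂]
  -- submodule identifications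
  have hsubP : LinearMap.ker (A + C) ⊓ LinearMap.ker (TensorProduct.map ε₁ ε₂ - LinearMap.id) =
      Submodule.map φ (LinearMap.ker (E - LinearMap.id)) := by
    rw [part1]
    exact range_inf_ker φ hφinj (E - LinearMap.id) (TensorProduct.map ε₁ ε₂ - LinearMap.id)
      (by rw [LinearMap.comp_sub, LinearMap.sub_comp, hcommE, LinearMap.comp_id,
        LinearMap.id_comp])
  have hsubM : LinearMap.ker (A + C) ⊓ LinearMap.ker (TensorProduct.map ε₁ ε₂ + LinearMap.id) =
      Submodule.map φ (LinearMap.ker (E + LinearMap.id)) := by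
    rw [part1]
    exact range_inf_ker φ hφinj (E + LinearMap.id) (TensorProduct.map ε₁ ε₂ + LinearMap.id)
      (by rw [LinearMap.comp_add, LinearMap.add_comp, hcommE, LinearMap.comp_id,
        LinearMap.id_comp])
  have hsub₁P : k₁ ⊓ LinearMap.ker (ε₁ - LinearMap.id) =
      Submodule.map k₁.subtype (LinearMap.ker (e₁ - LinearMap.id)) := by
    have h := range_inf_ker k₁.subtype k₁.injective_subtype (e₁ - LinearMap.id)
      (ε₁ - LinearMap.id)
      (by rw [LinearMap.comp_sub, LinearMap.sub_comp, hcs₁, LinearMap.comp_id,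
        LinearMap.id_comp])
    rw [Submodule.range_subtype] at h
    exact h
  have hsub₁M : k₁ ⊓ LinearMap.ker (ε₁ + LinearMap.id) =
      Submodule.map k₁.subtype (LinearMap.ker (e₁ + LinearMap.id)) := by
    have h := range_inf_ker k₁.subtype k₁.injective_subtype (e₁ + LinearMap.id)
      (ε₁ + LinearMap.id)
      (by rw [LinearMap.comp_add, LinearMap.add_comp, hcs₁, LinearMap.comp_id,
        LinearMap.id_comp])
    rw [Submodule.range_subtype] at h
    exact h
  have hsub₂P : k₂ ⊓ LinearMap.ker (ε₂ - LinearMap.id) =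
      Submodule.map k₂.subtype (LinearMap.ker (e₂ - LinearMap.id)) := by
    have h := range_inf_ker k₂.subtype k₂.injective_subtype (e₂ - LinearMap.id)
      (ε₂ - LinearMap.id)
      (by rw [LinearMap.comp_sub, LinearMap.sub_comp, hcs₂, LinearMap.comp_id,
        LinearMap.id_comp])
    rw [Submodule.range_subtype] at h
    exact h
  have hsub₂M : k₂ ⊓ LinearMap.ker (ε₂ + LinearMap.id) =
      Submodule.map k₂.subtype (LinearMap.ker (e₂ + LinearMap.id)) := by
    have h := range_inf_ker k₂.subtype k₂.injective_subtype (e₂ + LinearMap.id)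
      (ε₂ + LinearMap.id)
      (by rw [LinearMap.comp_add, LinearMap.add_comp, hcs₂, LinearMap.comp_id,
        LinearMap.id_comp])
    rw [Submodule.range_subtype] at h
    exact h
  -- finrank identifications
  have frmap : ∀ (p : Submodule ℝ (↥k₁ ⊗[ℝ] ↥k₂)),
      finrank ℝ ↥(Submodule.map φ p) = finrank ℝ ↥p :=
    fun p => (Submodule.equivMapOfInjective φ hφinj p).finrank_eq.symm
  have frmap₁ : ∀ (p : Submodule ℝ ↥k₁),
      finrank ℝ ↥(Submodule.map k₁.subtype p) = finrank ℝ ↥p :=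
    fun p => (Submodule.equivMapOfInjective k₁.subtype k₁.injective_subtype p).finrank_eq.symm
  have frmap₂ : ∀ (p : Submodule ℝ ↥k₂),
      finrank ℝ ↥(Submodule.map k₂.subtype p) = finrank ℝ ↥p :=
    fun p => (Submodule.equivMapOfInjective k₂.subtype k₂.injective_subtype p).finrank_eq.symm
  rw [hsubP, hsubM, hsub₁P, hsub₁M, hsub₂P, hsub₂M, frmap, frmap, frmap₁, frmap₁,
    frmap₂, frmap₂]
  -- the trace computation
  have h1 := invol_trace e₁ he₁
  have h2 := invol_trace e₂ he₂
  have hT := invol_trace E hE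
  have htens : LinearMap.trace ℝ (↥k₁ ⊗[ℝ] ↥k₂) E = LinearMap.trace ℝ ↥k₁ e₁ *
      LinearMap.trace ℝ ↥k₂ e₂ := by
    rw [hEdef]; exact LinearMap.trace_tensorProduct' e₁ e₂
  have hreal : ((finrank ℝ ↥(LinearMap.ker (E - LinearMap.id)) : ℝ) -
      (finrank ℝ ↥(LinearMap.ker (E + LinearMap.id)) : ℝ)) =
      ((finrank ℝ ↥(LinearMap.ker (e₁ - LinearMap.id)) : ℝ) -
        (finrank ℝ ↥(LinearMap.ker (e₁ + LinearMap.id)) : ℝ)) *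
      ((finrank ℝ ↥(LinearMap.ker (e₂ - LinearMap.id)) : ℝ) -
        (finrank ℝ ↥(LinearMap.ker (e₂ + LinearMap.id)) : ℝ)) := by
    rw [hT, htens, ← h1, ← h2]
  have hint : (((finrank ℝ ↥(LinearMap.ker (E - LinearMap.id)) : ℤ) -
      (finrank ℝ ↥(LinearMap.ker (E + LinearMap.id)) : ℤ)) : ℝ) =
      ((((finrank ℝ ↥(LinearMap.ker (e₁ - LinearMap.id)) : ℤ) -
        (finrank ℝ ↥(LinearMap.ker (e₁ + LinearMap.id)) : ℤ)) *
      ((finrank ℝ ↥(LinearMap.ker (e₂ - LinearMap.id)) : ℤ) -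
        (finrank ℝ ↥(LinearMap.ker (e₂ + LinearMap.id)) : ℤ))) : ℝ) := by
    push_cast
    exact hreal
  exact_mod_cast hint
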